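/- For data points x_1, ..., x_n in R^n (as vectors in the ambient space R^d) and weight vectors w_1,...,w_m, define the matrix H_perp in R^{n x n} by H_perp_{ij} = (xi/m) * <x_i, x_j> * sum_{r in S_i_perp} 1{<w_r, x_i> >= 0} * 1{<w_r, x_j> >= 0}, where S_i_perp is a subset of [m]. If ||x_i||_2 <= 1 for all i, xi in (0,1], and |S_i_perp| <= 4*m*kappa^{-1}*R for all i, then the spectral norm satisfies ||H_perp||_2 <= 4*n*xi*kappa^{-1}*R. -/

import Mathlib

open Finset

/-- If `H⊥` is the matrix with entries
`H⊥ i j = (ξ/m) ⟪x i, x j⟫ ∑_{r ∈ S i} 1{⟪w r, x i⟫ ≥ 0} 1{⟪w r, x j⟫ ≥ 0}`,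
where `‖x i‖ ≤ 1` and `|S i| ≤ 4 m κ⁻¹ R`, then the spectral norm satisfies
`‖H⊥‖₂ ≤ 4 n ξ κ⁻¹ R`. -/
theorem stmt14 (n m d : ℕ) (hm : 0 < m) (ξ κ R : ℝ)
    (hξ : ξ ∈ Set.Ioc (0 : ℝ) 1) (hκ : 0 < κ) (hR : 0 < R)
    (x : Fin n → EuclideanSpace ℝ (Fin d)) (hx : ∀ i, ‖x i‖ ≤ 1)
    (w : Fin m → EuclideanSpace ℝ (Fin d))
    (S : Fin n → Finset (Fin m))
    (hS : ∀ i, ((S i).card : ℝ) ≤ 4 * m * κ⁻¹ * R)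
    (Hperp : Matrix (Fin n) (Fin n) ℝ)
    (hH : ∀ i j, Hperp i j = (ξ / m) * (inner ℝ (x i) (x j) : ℝ) *
      ∑ r ∈ S i, (if 0 ≤ (inner ℝ (w r) (x i) : ℝ) then (1 : ℝ) else 0) *
        (if 0 ≤ (inner ℝ (w r) (x j) : ℝ) then (1 : ℝ) else 0)) :
    ‖Matrix.toEuclideanCLM (𝕜 := ℝ) Hperp‖ ≤ 4 * n * ξ * κ⁻¹ * R := by
  obtain ⟨hξ0, hξ1⟩ := hξ
  set B : ℝ := 4 * ξ * κ⁻¹ * R with hBdef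
  have hB0 : 0 ≤ B := by positivity
  -- entrywise bound
  have hentry : ∀ i j, |Hperp i j| ≤ B := by
    intro i j
    rw [hH]
    have h1 : |(inner ℝ (x i) (x j) : ℝ)| ≤ 1 := by
      calc |(inner ℝ (x i) (x j) : ℝ)| ≤ ‖x i‖ * ‖x j‖ := abs_real_inner_le_norm _ _
        _ ≤ 1 * 1 := by
          exact mul_le_mul (hx i) (hx j) (norm_nonneg _) zero_le_one
        _ = 1 := one_mul 1
    have hsum_nonneg : (0:ℝ) ≤ ∑ r ∈ S i,
        (if 0 ≤ (inner ℝ (w r) (x i) : ℝ) then (1 : ℝ) else 0) *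
        (if 0 ≤ (inner ℝ (w r) (x j) : ℝ) then (1 : ℝ) else 0) := by
      apply Finset.sum_nonneg
      intro r _
      positivity
    have hsum_le : (∑ r ∈ S i,
        (if 0 ≤ (inner ℝ (w r) (x i) : ℝ) then (1 : ℝ) else 0) *
        (if 0 ≤ (inner ℝ (w r) (x j) : ℝ) then (1 : ℝ) else 0)) ≤ (S i).card := by
      calc _ ≤ ∑ _r ∈ S i, (1:ℝ) := by
            apply Finset.sum_le_sum
            intro r _
            split_ifs <;> norm_num
        _ = (S i).card := by simp
    rw [abs_mul, abs_mul]
    have hm' : (0:ℝ) < m := by exact_mod_cast hm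
    have hξm : |ξ / m| = ξ / m := abs_of_pos (by positivity)
    rw [hξm, abs_of_nonneg hsum_nonneg]
    calc ξ / m * |(inner ℝ (x i) (x j) : ℝ)| * _
        ≤ ξ / m * 1 * ((S i).card : ℝ) := by
          apply mul_le_mul _ hsum_le hsum_nonneg (by positivity)
          exact mul_le_mul_of_nonneg_left h1 (by positivity)
      _ ≤ ξ / m * 1 * (4 * m * κ⁻¹ * R) := by
          apply mul_le_mul_of_nonneg_left (hS i) (by positivity)
      _ = B := by field_simp [hBdef]; rw [hBdef]; field_simp
  -- column sum bound
  apply ContinuousLinearMap.opNorm_le_bound _ (by positivity)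
  intro v
  have hcomp : ∀ i, |(Matrix.toEuclideanCLM (𝕜 := ℝ) Hperp v) i| ≤ Real.sqrt n * B * ‖v‖ := by
    intro i
    have : (Matrix.toEuclideanCLM (𝕜 := ℝ) Hperp v) i
        = ∑ j, Hperp i j * v j := by
      have := Matrix.ofLp_toEuclideanCLM (𝕜 := ℝ) Hperp v
      have h2 : (Matrix.toEuclideanCLM (𝕜 := ℝ) Hperp v) i
          = (WithLp.ofLp ((Matrix.toEuclideanCLM (𝕜 := ℝ) Hperp) v)) i := rfl
      rw [h2, this]
      rfl
    rw [this]
    have habs : ∑ j, |(v : Fin n → ℝ) j| ≤ Real.sqrt n * ‖v‖ := by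
      have h1 : (∑ j, |(v : Fin n → ℝ) j|) ^ 2 ≤ (n : ℝ) * ‖v‖ ^ 2 := by
        have := sq_sum_le_card_mul_sum_sq (s := Finset.univ) (f := fun j => |(v : Fin n → ℝ) j|)
        simp only [Finset.card_univ, Fintype.card_fin, sq_abs] at this
        have hnorm : ‖v‖ ^ 2 = ∑ j, (v : Fin n → ℝ) j ^ 2 := by
          rw [EuclideanSpace.norm_eq, Real.sq_sqrt (by positivity)]
          simp [Real.norm_eq_abs, sq_abs]
        rw [hnorm]
        exact_mod_cast this
      have h2 : (0:ℝ) ≤ Real.sqrt n * ‖v‖ := by positivity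
      nlinarith [Finset.sum_nonneg (fun j (_ : j ∈ Finset.univ) => abs_nonneg ((v : Fin n → ℝ) j)),
        Real.sq_sqrt (Nat.cast_nonneg n : (0:ℝ) ≤ n), Real.sqrt_nonneg (n:ℝ)]
    calc |∑ j, Hperp i j * v j| ≤ ∑ j, |Hperp i j * v j| := Finset.abs_sum_le_sum_abs _ _
      _ ≤ ∑ j, B * |(v : Fin n → ℝ) j| := by
          apply Finset.sum_le_sum
          intro j _
          rw [abs_mul]
          exact mul_le_mul_of_nonneg_right (hentry i j) (abs_nonneg _)
      _ = B * ∑ j, |(v : Fin n → ℝ) j| := by rw [Finset.mul_sum]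
      _ ≤ B * (Real.sqrt n * ‖v‖) := mul_le_mul_of_nonneg_left habs hB0
      _ = Real.sqrt n * B * ‖v‖ := by ring
  have hnv : ‖Matrix.toEuclideanCLM (𝕜 := ℝ) Hperp v‖ ≤ Real.sqrt n * (Real.sqrt n * B * ‖v‖) := by
    rw [EuclideanSpace.norm_eq]
    have hb : (0:ℝ) ≤ Real.sqrt n * B * ‖v‖ := by positivity
    calc Real.sqrt (∑ i, ‖(Matrix.toEuclideanCLM (𝕜 := ℝ) Hperp v) i‖ ^ 2)
        ≤ Real.sqrt (∑ _i : Fin n, (Real.sqrt n * B * ‖v‖) ^ 2) := by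
          apply Real.sqrt_le_sqrt
          apply Finset.sum_le_sum
          intro i _
          rw [Real.norm_eq_abs]
          exact pow_le_pow_left₀ (abs_nonneg _) (hcomp i) 2
      _ = Real.sqrt n * (Real.sqrt n * B * ‖v‖) := by
          rw [Finset.sum_const, Finset.card_univ, Fintype.card_fin, nsmul_eq_mul,
            Real.sqrt_mul (Nat.cast_nonneg n), Real.sqrt_sq hb]
  calc ‖Matrix.toEuclideanCLM (𝕜 := ℝ) Hperp v‖
      ≤ Real.sqrt n * (Real.sqrt n * B * ‖v‖) := hnv
    _ = (Real.sqrt n * Real.sqrt n) * B * ‖v‖ := by ring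
    _ = (n : ℝ) * B * ‖v‖ := by rw [Real.mul_self_sqrt (Nat.cast_nonneg n)]
    _ = 4 * n * ξ * κ⁻¹ * R * ‖v‖ := by rw [hBdef]; ring
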